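/- Two copies of the instrument J = {Ψ_x(ρ) = ρ/n}_{x=1}^n on a Hilbert space H of dimension at least 2 are not parallel compatible. Equivalently, there is no instrument {Φ_{xy}: L(H)→L(H⊗H)}_{x,y=1}^n with Σ_y tr₂ Φ_{xy} = (1/n)·id and Σ_x tr₁ Φ_{xy} = (1/n)·id (a consequence of the incompatibility of the identity channel with itself / no-cloning). -/

import Mathlib

open Matrix
open scoped Kronecker BigOperators ComplexOrder

noncomputable section

namespace QI

/-- Linear maps between matrix algebras (superoperators). -/
abbrev MatMap (n m : Type*) [Fintype n] [Fintype m] :=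
  Matrix n n ℂ →ₗ[ℂ] Matrix m m ℂ

variable {n m m₁ m₂ ι ι₁ ι₂ : Type*}

/-- The Choi matrix of a superoperator. -/
def choi [Fintype n] [DecidableEq n] [Fintype m] (Φ : MatMap n m) :
    Matrix (n × m) (n × m) ℂ :=
  Matrix.of fun p q => Φ (Matrix.single p.1 q.1 1) p.2 q.2

/-- Complete positivity, via positive semidefiniteness of the Choi matrix. -/
def IsCP [Fintype n] [DecidableEq n] [Fintype m] (Φ : MatMap n m) : Prop :=
  (choi Φ).PosSemidef

/-- Trace preserving map. -/
def IsTP [Fintype n] [Fintype m] (Φ : MatMap n m) : Prop :=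
  ∀ ρ, (Φ ρ).trace = ρ.trace

/-- Trace non-increasing map (on positive semidefinite inputs). -/
def IsTNI [Fintype n] [Fintype m] (Φ : MatMap n m) : Prop :=
  ∀ ρ : Matrix n n ℂ, ρ.PosSemidef → (Φ ρ).trace.re ≤ ρ.trace.re

/-- A quantum channel: CP and trace preserving. -/
def IsChannel [Fintype n] [DecidableEq n] [Fintype m] (Φ : MatMap n m) : Prop :=
  IsCP Φ ∧ IsTP Φ

/-- A quantum instrument: a finite family of CP maps summing to a TP map. -/
structure Instrument (ι n m : Type*) [Fintype ι] [Fintype n] [DecidableEq n] [Fintype m] where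
  op : ι → MatMap n m
  cp : ∀ x, IsCP (op x)
  tp : IsTP (∑ x, op x)

/-- Partial trace over the second tensor factor, as a linear map. -/
def ptrace₂ [Fintype m₁] [Fintype m₂] :
    Matrix (m₁ × m₂) (m₁ × m₂) ℂ →ₗ[ℂ] Matrix m₁ m₁ ℂ where
  toFun M := Matrix.of fun i j => ∑ k, M (i, k) (j, k)
  map_add' M N := by ext i j; simp [Finset.sum_add_distrib]
  map_smul' c M := by ext i j; simp [Finset.mul_sum]

/-- Partial trace over the first tensor factor, as a linear map. -/
def ptrace₁ [Fintype m₁] [Fintype m₂] :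
    Matrix (m₁ × m₂) (m₁ × m₂) ℂ →ₗ[ℂ] Matrix m₂ m₂ ℂ where
  toFun M := Matrix.of fun i j => ∑ k, M (k, i) (k, j)
  map_add' M N := by ext i j; simp [Finset.sum_add_distrib]
  map_smul' c M := by ext i j; simp [Finset.mul_sum]

/-- Parallel compatibility of two instruments. -/
def ParallelCompatible [Fintype ι₁] [Fintype ι₂] [Fintype n] [DecidableEq n]
    [Fintype m₁] [Fintype m₂]
    (I₁ : Instrument ι₁ n m₁) (I₂ : Instrument ι₂ n m₂) : Prop :=
  ∃ J : Instrument (ι₁ × ι₂) n (m₁ × m₂),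
    (∀ x, ∑ y, ptrace₂ ∘ₗ J.op (x, y) = I₁.op x) ∧
    (∀ y, ∑ x, ptrace₁ ∘ₗ J.op (x, y) = I₂.op y)

/-- The dual (Heisenberg picture) of a superoperator, characterized by
`tr[Φ(ρ) M] = tr[ρ Φ*(M)]`. -/
def dualMap [Fintype n] [DecidableEq n] [Fintype m] (Φ : MatMap n m) (M : Matrix m m ℂ) :
    Matrix n n ℂ :=
  Matrix.of fun i j => (Φ (Matrix.single j i 1) * M).trace

/-- A POVM: positive semidefinite effects summing to the identity. -/
def IsPOVM [Fintype n] [DecidableEq n] (A : ι → Matrix n n ℂ) [Fintype ι] : Prop :=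
  (∀ x, (A x).PosSemidef) ∧ ∑ x, A x = 1

/-- The POVM induced by an instrument: `A(x) = Φ_x*(𝟙)`. -/
def inducedPOVM [Fintype ι] [Fintype n] [DecidableEq n] [Fintype m] [DecidableEq m]
    (I : Instrument ι n m) (x : ι) : Matrix n n ℂ :=
  dualMap (I.op x) 1

/-- Compatibility of two POVMs via a joint POVM. -/
def POVMsCompatible [Fintype ι₁] [Fintype ι₂] [Fintype n] [DecidableEq n]
    (A₁ : ι₁ → Matrix n n ℂ) (A₂ : ι₂ → Matrix n n ℂ) : Prop :=
  ∃ G : ι₁ × ι₂ → Matrix n n ℂ, IsPOVM G ∧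
    (∀ x, ∑ y, G (x, y) = A₁ x) ∧ (∀ y, ∑ x, G (x, y) = A₂ y)

/-- Compatibility of two channels via a joint channel. -/
def ChannelsCompatible [Fintype n] [DecidableEq n] [Fintype m₁] [Fintype m₂]
    (Φ₁ : MatMap n m₁) (Φ₂ : MatMap n m₂) : Prop :=
  ∃ Λ : MatMap n (m₁ × m₂), IsChannel Λ ∧
    ptrace₂ ∘ₗ Λ = Φ₁ ∧ ptrace₁ ∘ₗ Λ = Φ₂

/-- Generalized incompatibility robustness of a pair of instruments. -/
def RI [Fintype ι₁] [Fintype ι₂] [Fintype n] [DecidableEq n]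
    [Fintype m₁] [Fintype m₂]
    (I₁ : Instrument ι₁ n m₁) (I₂ : Instrument ι₂ n m₂) : ℝ :=
  sInf {r : ℝ | 0 ≤ r ∧
    ∃ (N₁ : Instrument ι₁ n m₁) (N₂ : Instrument ι₂ n m₂)
      (J : Instrument (ι₁ × ι₂) n (m₁ × m₂)),
      (∀ x, ((1 + r : ℝ) : ℂ)⁻¹ • (I₁.op x + (r : ℂ) • N₁.op x)
          = ∑ y, ptrace₂ ∘ₗ J.op (x, y)) ∧
      (∀ y, ((1 + r : ℝ) : ℂ)⁻¹ • (I₂.op y + (r : ℂ) • N₂.op y)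
          = ∑ x, ptrace₁ ∘ₗ J.op (x, y))}

/-- Generalized incompatibility robustness of a pair of POVMs. -/
def RM [Fintype ι₁] [Fintype ι₂] [Fintype n] [DecidableEq n]
    (A₁ : ι₁ → Matrix n n ℂ) (A₂ : ι₂ → Matrix n n ℂ) : ℝ :=
  sInf {r : ℝ | 0 ≤ r ∧
    ∃ (B₁ : ι₁ → Matrix n n ℂ) (B₂ : ι₂ → Matrix n n ℂ) (G : ι₁ × ι₂ → Matrix n n ℂ),
      IsPOVM B₁ ∧ IsPOVM B₂ ∧ (∀ p, (G p).PosSemidef) ∧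
      (∀ x, ((1 + r : ℝ) : ℂ)⁻¹ • (A₁ x + (r : ℂ) • B₁ x) = ∑ y, G (x, y)) ∧
      (∀ y, ((1 + r : ℝ) : ℂ)⁻¹ • (A₂ y + (r : ℂ) • B₂ y) = ∑ x, G (x, y))}

/-- Generalized incompatibility robustness of a pair of channels. -/
def RC [Fintype n] [DecidableEq n] [Fintype m₁] [Fintype m₂]
    (Φ₁ : MatMap n m₁) (Φ₂ : MatMap n m₂) : ℝ :=
  sInf {r : ℝ | 0 ≤ r ∧
    ∃ (N₁ : MatMap n m₁) (N₂ : MatMap n m₂) (Λ : MatMap n (m₁ × m₂)),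
      IsChannel N₁ ∧ IsChannel N₂ ∧ IsChannel Λ ∧
      ((1 + r : ℝ) : ℂ)⁻¹ • (Φ₁ + (r : ℂ) • N₁) = ptrace₂ ∘ₗ Λ ∧
      ((1 + r : ℝ) : ℂ)⁻¹ • (Φ₂ + (r : ℂ) • N₂) = ptrace₁ ∘ₗ Λ}

/-- Post-processing relation on instruments: `I₂ ≲ I₁`. -/
def PostProcessingOf [Fintype ι₁] [Fintype ι₂] [Fintype n] [DecidableEq n]
    [Fintype m₁] [DecidableEq m₁] [Fintype m₂]
    (I₂ : Instrument ι₂ n m₂) (I₁ : Instrument ι₁ n m₁) : Prop :=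
  ∃ R : ι₁ → Instrument ι₂ m₁ m₂,
    ∀ y, I₂.op y = ∑ x, (R x).op y ∘ₗ I₁.op x

/-- A density matrix (quantum state). -/
def IsState [Fintype m] (η : Matrix m m ℂ) : Prop :=
  η.PosSemidef ∧ η.trace = 1

/-- A pure state. -/
def IsPureState [Fintype m] (η : Matrix m m ℂ) : Prop :=
  ∃ v : m → ℂ, (∑ i, star (v i) * v i) = 1 ∧ η = Matrix.vecMulVec v (star v)

/-- The trash-and-prepare map `ρ ↦ tr(ρ) • η`. -/
def trashPrep [Fintype n] [Fintype m] (η : Matrix m m ℂ) : MatMap n m :=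
  (Matrix.traceLinearMap n ℂ ℂ).smulRight η

/-- Tensoring with a fixed matrix on the right, as a linear map. -/
def kronRight [Fintype m₁] [Fintype m₂] (B : Matrix m₂ m₂ ℂ) :
    Matrix m₁ m₁ ℂ →ₗ[ℂ] Matrix (m₁ × m₂) (m₁ × m₂) ℂ where
  toFun A := A ⊗ₖ B
  map_add' A A' := by ext ⟨i, k⟩ ⟨j, l⟩; simp [Matrix.kroneckerMap_apply, add_mul]
  map_smul' c A := by ext ⟨i, k⟩ ⟨j, l⟩; simp [Matrix.kroneckerMap_apply, mul_assoc]

/-- Tensoring with a fixed matrix on the left, as a linear map. -/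
def kronLeft [Fintype m₁] [Fintype m₂] (A : Matrix m₁ m₁ ℂ) :
    Matrix m₂ m₂ ℂ →ₗ[ℂ] Matrix (m₁ × m₂) (m₁ × m₂) ℂ where
  toFun B := A ⊗ₖ B
  map_add' B B' := by ext ⟨i, k⟩ ⟨j, l⟩; simp [Matrix.kroneckerMap_apply, mul_add]
  map_smul' c B := by
    ext ⟨i, k⟩ ⟨j, l⟩
    simp only [Matrix.kroneckerMap_apply, Matrix.smul_apply, smul_eq_mul, RingHom.id_apply]
    ring

/-- Measure-and-prepare operation: `ρ ↦ tr(ρ A) • σ`. -/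
def mpOp [Fintype n] [Fintype m] (A : Matrix n n ℂ) (σ : Matrix m m ℂ) : MatMap n m where
  toFun ρ := (ρ * A).trace • σ
  map_add' ρ ρ' := by simp [Matrix.add_mul, Matrix.trace_add, add_smul]
  map_smul' c ρ := by simp [Matrix.smul_mul, Matrix.trace_smul, smul_smul]

/-- Conjugation by a Kraus operator: `ρ ↦ K ρ K†`. -/
def krausOp [Fintype n] [Fintype m] (K : Matrix m n ℂ) : MatMap n m where
  toFun ρ := K * ρ * Kᴴ
  map_add' ρ ρ' := by simp [Matrix.mul_add, Matrix.add_mul]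
  map_smul' c ρ := by simp [Matrix.mul_smul, Matrix.smul_mul]

end QI

end

/-!
Summing the outcomes of a joint instrument for two copies of `J` yields a channel
`Λ : L(H) → L(H ⊗ H)` both of whose marginals are `∑ₓ Ψₓ = id`, i.e. a cloning channel.
Its Choi matrix `C` is positive semidefinite. Since `tr₁ ∘ Λ = id`, the diagonal entries
`C (i,k,l) (i,k,l)` with `l ≠ i` sum to zero, so they vanish together with their rows and
columns. But `tr₂ ∘ Λ = id` gives `∑ₗ C (a,a,l) (b,b,l) = 1` for `a ≠ b`, while each term lies
in such a row (`l ≠ a`) or column (`l = a ≠ b`).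
-/

theorem Matrix.PosSemidef.apply_eq_zero_of_diag_eq_zero {n 𝕜 : Type*} [Fintype n] [RCLike 𝕜]
    {A : Matrix n n 𝕜} (hA : A.PosSemidef) {i : n} (hi : A i i = 0) (j : n) : A i j = 0 := by
  have hdet := (hA.submatrix ![i, j]).det_nonneg
  rw [Matrix.det_fin_two] at hdet
  simp only [Matrix.submatrix_apply, Matrix.cons_val_zero, Matrix.cons_val_one, hi, zero_mul,
    zero_sub, ← hA.isHermitian.apply j i] at hdet
  have : A i j * star (A i j) = 0 :=
    le_antisymm (neg_nonneg.mp hdet) (mul_star_self_nonneg _)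
  simpa using this

namespace QI

variable {n m m₁ m₂ ι ι₁ ι₂ : Type*}

theorem isCP_sum [Fintype n] [DecidableEq n] [Fintype m] (s : Finset ι) {Φ : ι → MatMap n m}
    (hΦ : ∀ i ∈ s, IsCP (Φ i)) : IsCP (∑ i ∈ s, Φ i) := by
  have : choi (∑ i ∈ s, Φ i) = ∑ i ∈ s, choi (Φ i) := by
    ext p q; simp [choi, Matrix.sum_apply]
  show (choi _).PosSemidef
  rw [this]
  exact Matrix.posSemidef_sum s hΦ

theorem Instrument.nonempty_index [Fintype ι] [Fintype n] [DecidableEq n] [Nonempty n] [Fintype m]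
    (I : Instrument ι n m) : Nonempty ι := by
  by_contra h
  rw [not_nonempty_iff] at h
  have htr := I.tp 1
  simp only [Finset.univ_eq_empty, Finset.sum_empty, LinearMap.zero_apply, trace_zero,
    trace_one] at htr
  exact Fintype.card_ne_zero (by exact_mod_cast htr.symm)

theorem ParallelCompatible.channelsCompatible_sum [Fintype ι₁] [Fintype ι₂] [Fintype n]
    [DecidableEq n] [Fintype m₁] [Fintype m₂]
    {I₁ : Instrument ι₁ n m₁} {I₂ : Instrument ι₂ n m₂} (h : ParallelCompatible I₁ I₂) :
    ChannelsCompatible (∑ x, I₁.op x) (∑ y, I₂.op y) := by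
  obtain ⟨K, h₁, h₂⟩ := h
  refine ⟨∑ p, K.op p, ⟨isCP_sum _ fun p _ => K.cp p, K.tp⟩, ?_, ?_⟩
  · ext1 ρ; simp [← h₁, LinearMap.sum_apply, map_sum, Fintype.sum_prod_type]
  · ext1 ρ; simp [← h₂, LinearMap.sum_apply, map_sum, Fintype.sum_prod_type_right]

theorem ptrace₂_apply_single_eq_sum_choi [Fintype n] [DecidableEq n] [Fintype m₁] [Fintype m₂]
    (Λ : MatMap n (m₁ × m₂)) (i j : n) (k k' : m₁) :
    ptrace₂ (Λ (Matrix.single i j 1)) k k' = ∑ l, choi Λ (i, (k, l)) (j, (k', l)) := rfl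

theorem ptrace₁_apply_single_eq_sum_choi [Fintype n] [DecidableEq n] [Fintype m₁] [Fintype m₂]
    (Λ : MatMap n (m₁ × m₂)) (i j : n) (l l' : m₂) :
    ptrace₁ (Λ (Matrix.single i j 1)) l l' = ∑ k, choi Λ (i, (k, l)) (j, (k, l')) := rfl

theorem not_channelsCompatible_id_id [Fintype n] [DecidableEq n] [Nontrivial n] :
    ¬ ChannelsCompatible (LinearMap.id : MatMap n n) LinearMap.id := by
  rintro ⟨Λ, ⟨hCP, -⟩, h₂, h₁⟩
  have hC : (choi Λ).PosSemidef := hCP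
  have hdiag : ∀ i k l : n, l ≠ i → choi Λ (i, (k, l)) (i, (k, l)) = 0 := by
    intro i k l hli
    have hsum : ∑ k, choi Λ (i, (k, l)) (i, (k, l)) = 0 := by
      rw [← ptrace₁_apply_single_eq_sum_choi, ← LinearMap.comp_apply, h₁, LinearMap.id_apply,
        Matrix.single_apply_of_ne _ _ _ _ _ fun h => hli h.1.symm]
    exact (Finset.sum_eq_zero_iff_of_nonneg fun k _ => hC.diag_nonneg).mp hsum k
      (Finset.mem_univ k)
  obtain ⟨a, b, hab⟩ := exists_pair_ne n
  have hone : ∑ l, choi Λ (a, (a, l)) (b, (b, l)) = 1 := by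
    rw [← ptrace₂_apply_single_eq_sum_choi, ← LinearMap.comp_apply, h₂, LinearMap.id_apply,
      Matrix.single_apply_same]
  have hzero : ∑ l, choi Λ (a, (a, l)) (b, (b, l)) = 0 := by
    refine Finset.sum_eq_zero fun l _ => ?_
    by_cases hla : l = a
    · rw [hla, ← hC.isHermitian.apply,
        hC.apply_eq_zero_of_diag_eq_zero (hdiag b b a hab), star_zero]
    · exact hC.apply_eq_zero_of_diag_eq_zero (hdiag a a l hla) _
  exact one_ne_zero (hone.symm.trans hzero)

end QI

open QI in
/-- two copies of `{ρ ↦ ρ/n}` are not parallel compatible (no-cloning). -/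
theorem identity_instrument_not_self_compatible {n : Type*} [Fintype n] [DecidableEq n]
    (hdim : 2 ≤ Fintype.card n) (N : ℕ)
    (J : Instrument (Fin N) n n)
    (hJ : ∀ x, J.op x = (N : ℂ)⁻¹ • LinearMap.id) :
    ¬ ParallelCompatible J J := by
  intro hJJ
  have : Nontrivial n := Fintype.one_lt_card_iff_nontrivial.mp hdim
  have hN : (N : ℂ) ≠ 0 := Nat.cast_ne_zero.mpr (Fin.pos_iff_nonempty.mpr J.nonempty_index).ne'
  have hsum : ∑ x, J.op x = LinearMap.id := by
    simp only [hJ, Finset.sum_const, Finset.card_univ, Fintype.card_fin,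
      ← Nat.cast_smul_eq_nsmul ℂ, smul_smul, mul_inv_cancel₀ hN, one_smul]
  exact not_channelsCompatible_id_id (hsum ▸ hJJ.channelsCompatible_sum)
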